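/- Let A be an irreducible n×n max-plus matrix (n ≥ 1). Then (i) there exists x : Fin n → ℝ such that for all i, max over j : Fin n of (A i j + (x j : WithBot ℝ)) = ((λ(A) + x i : ℝ) : WithBot ℝ), and (ii) for every μ ∈ ℝ and x : Fin n → ℝ, if for all i, max over j : Fin n of (A i j + (x j : WithBot ℝ)) = ((μ + x i : ℝ) : WithBot ℝ), then μ = λ(A). That is, an irreducible matrix admits a unique max-plus eigenvalue with a finite eigenvector, and it equals the maximum cycle mean. -/

import Mathlib

/-- `A` is irreducible: its precedence graph is strongly connected, i.e. for
all `i j` there is a path `i₀ = j, i₁, …, i_m = i` (`m ≥ 1`) with all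
traversed entries finite. -/
def MPIrreducible {n : ℕ} (A : Matrix (Fin n) (Fin n) (WithBot ℝ)) : Prop :=
  ∀ i j : Fin n, ∃ m : ℕ, 1 ≤ m ∧ ∃ p : ℕ → Fin n,
    p 0 = j ∧ p m = i ∧ ∀ t < m, A (p (t + 1)) (p t) ≠ ⊥

/-- `μ` is the mean of some circuit of the precedence graph of `A`. -/
def IsCycleMean {n : ℕ} (A : Matrix (Fin n) (Fin n) (WithBot ℝ)) (μ : ℝ) : Prop :=
  ∃ m : ℕ, 1 ≤ m ∧ ∃ p : ℕ → Fin n, ∃ w : ℕ → ℝ,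
    p m = p 0 ∧ (∀ t < m, A (p (t + 1)) (p t) = ((w t : ℝ) : WithBot ℝ)) ∧
    μ = (∑ t ∈ Finset.range m, w t) / m

/-- `lam` is the maximum cycle mean `λ(A)` of `A`. -/
def IsMaxCycleMean {n : ℕ} (A : Matrix (Fin n) (Fin n) (WithBot ℝ)) (lam : ℝ) : Prop :=
  IsCycleMean A lam ∧ ∀ μ : ℝ, IsCycleMean A μ → μ ≤ lam

section MPAux

variable {n : ℕ}

/-- validity of a path of length `m` in the precedence graph of `A`. -/
def mpPath (A : Matrix (Fin n) (Fin n) (WithBot ℝ)) (m : ℕ) (p : ℕ → Fin n) : Prop :=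
  ∀ t < m, A (p (t + 1)) (p t) ≠ ⊥

/-- the (real) weight of a path. -/
noncomputable def mpW (A : Matrix (Fin n) (Fin n) (WithBot ℝ)) (p : ℕ → Fin n) (m : ℕ) : ℝ :=
  ∑ t ∈ Finset.range m, WithBot.unbotD 0 (A (p (t + 1)) (p t))

lemma mp_edge_coe {A : Matrix (Fin n) (Fin n) (WithBot ℝ)} {m : ℕ} {p : ℕ → Fin n}
    (hp : mpPath A m p) {t : ℕ} (ht : t < m) :
    A (p (t + 1)) (p t) = ((WithBot.unbotD 0 (A (p (t + 1)) (p t)) : ℝ) : WithBot ℝ) := by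
  obtain ⟨a, ha⟩ := WithBot.ne_bot_iff_exists.mp (hp t ht)
  rw [← ha, WithBot.unbotD_coe]

lemma mp_pigeon (q : ℕ → Fin n) : ∃ a b : ℕ, a < b ∧ b ≤ n ∧ q a = q b := by
  obtain ⟨x, hx, y, hy, hne, he⟩ :=
    Finset.exists_ne_map_eq_of_card_lt_of_maps_to
      (s := Finset.range (n + 1)) (t := Finset.univ) (by simp)
      (fun a _ => Finset.mem_univ (q a))
  rw [Finset.mem_range] at hx hy
  rcases hne.lt_or_gt with h | h
  · exact ⟨x, y, h, by omega, he⟩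
  · exact ⟨y, x, h, by omega, he.symm⟩

lemma mp_cycle_mean {A : Matrix (Fin n) (Fin n) (WithBot ℝ)} {m : ℕ} {p : ℕ → Fin n}
    (hm : 1 ≤ m) (hp : mpPath A m p) (hc : p m = p 0) :
    IsCycleMean A (mpW A p m / m) :=
  ⟨m, hm, p, fun t => WithBot.unbotD 0 (A (p (t + 1)) (p t)), hc,
    fun t ht => mp_edge_coe hp ht, rfl⟩

lemma mp_cycle_bound {A : Matrix (Fin n) (Fin n) (WithBot ℝ)} {lam : ℝ}
    (hlam2 : ∀ μ : ℝ, IsCycleMean A μ → μ ≤ lam) {m : ℕ} {p : ℕ → Fin n}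
    (hm : 1 ≤ m) (hp : mpPath A m p) (hc : p m = p 0) :
    mpW A p m ≤ m * lam := by
  have h := hlam2 _ (mp_cycle_mean hm hp hc)
  have hm' : (0 : ℝ) < m := by exact_mod_cast hm
  rw [div_le_iff₀ hm'] at h
  linarith

/-- Splitting a path with a repeated vertex into the removed circuit and the
remaining path. -/
lemma mp_split {A : Matrix (Fin n) (Fin n) (WithBot ℝ)} {m a b : ℕ} {p : ℕ → Fin n}
    (hp : mpPath A m p) (hab : a < b) (hbm : b ≤ m) (heq : p a = p b) :
    mpPath A (m - (b - a)) (fun t => if t ≤ a then p t else p (t + (b - a))) ∧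
    (fun t => if t ≤ a then p t else p (t + (b - a))) 0 = p 0 ∧
    (fun t => if t ≤ a then p t else p (t + (b - a))) (m - (b - a)) = p m ∧
    mpPath A (b - a) (fun t => p (a + t)) ∧
    (fun t => p (a + t)) (b - a) = (fun t => p (a + t)) 0 ∧
    mpW A p m = mpW A (fun t => if t ≤ a then p t else p (t + (b - a))) (m - (b - a))
      + mpW A (fun t => p (a + t)) (b - a) := by
  set d := b - a with hd
  set q : ℕ → Fin n := fun t => if t ≤ a then p t else p (t + d) with hqdef
  have hq2 : ∀ t, a ≤ t → q t = p (t + d) := by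
    intro t ht
    by_cases h : t ≤ a
    · have hta : t = a := le_antisymm h ht
      subst hta
      simp only [hqdef, if_pos le_rfl]
      rw [show t + d = b by omega]
      exact heq
    · simp only [hqdef, if_neg h]
  have hq1 : ∀ t, t ≤ a → q t = p t := by
    intro t ht; simp only [hqdef, if_pos ht]
  have hedge : ∀ t, t < m - d →
      A (q (t + 1)) (q t) = if t < a then A (p (t + 1)) (p t)
        else A (p (t + d + 1)) (p (t + d)) := by
    intro t ht
    by_cases h : t < a
    · rw [hq1 t h.le, hq1 (t + 1) h, if_pos h]
    · push_neg at h
      rw [hq2 t h, hq2 (t + 1) (by omega), if_neg (by omega),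
        show t + 1 + d = t + d + 1 by omega]
  refine ⟨?_, ?_, ?_, ?_, ?_, ?_⟩
  · intro t ht
    rw [hedge t ht]
    by_cases h : t < a
    · rw [if_pos h]; exact hp t (by omega)
    · rw [if_neg h]; exact hp (t + d) (by omega)
  · exact hq1 0 (Nat.zero_le a)
  · by_cases h : m - d ≤ a
    · have hmb : m = b := by omega
      have hma : m - d = a := by omega
      rw [hma, hq1 a le_rfl, heq, hmb]
    · push_neg at h
      rw [hq2 _ h.le, show m - d + d = m by omega]
  · intro t ht
    have h2 : A (p (a + t + 1)) (p (a + t)) ≠ ⊥ := hp (a + t) (by omega)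
    simpa [show a + (t + 1) = (a + t) + 1 by omega] using h2
  · simp only
    rw [show a + (b - a) = b by omega, ← heq, Nat.add_zero]
  · -- the weight identity
    set w : ℕ → ℝ := fun t => WithBot.unbotD 0 (A (p (t + 1)) (p t)) with hw
    have hwq : ∀ t, t < m - d →
        WithBot.unbotD 0 (A (q (t + 1)) (q t)) = if t < a then w t else w (t + d) := by
      intro t ht
      rw [hedge t ht]
      by_cases h : t < a
      · rw [if_pos h, if_pos h]
      · rw [if_neg h, if_neg h]
    have hWq : mpW A q (m - d) =
        (∑ t ∈ Finset.range a, w t) + ∑ t ∈ Finset.Ico b m, w t := by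
      unfold mpW
      rw [Finset.range_eq_Ico, ← Finset.sum_Ico_consecutive _ (Nat.zero_le a) (by omega : a ≤ m - d)]
      congr 1
      · rw [← Finset.range_eq_Ico]
        refine Finset.sum_congr rfl fun t ht => ?_
        rw [Finset.mem_range] at ht
        rw [hwq t (by omega), if_pos ht]
      · rw [Finset.sum_Ico_eq_sum_range, Finset.sum_Ico_eq_sum_range,
          show m - d - a = m - b by omega]
        refine Finset.sum_congr rfl fun t ht => ?_
        rw [Finset.mem_range] at ht
        rw [hwq (a + t) (by omega), if_neg (by omega), show a + t + d = b + t by omega]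
    have hWr : mpW A (fun t => p (a + t)) d = ∑ t ∈ Finset.Ico a b, w t := by
      unfold mpW
      rw [Finset.sum_Ico_eq_sum_range, show b - a = d from rfl]
      refine Finset.sum_congr rfl fun t ht => ?_
      simp only [hw]
      rw [show a + (t + 1) = a + t + 1 by omega]
    have hWp : mpW A p m =
        ((∑ t ∈ Finset.range a, w t) + ∑ t ∈ Finset.Ico a b, w t)
        + ∑ t ∈ Finset.Ico b m, w t := by
      unfold mpW
      rw [Finset.range_eq_Ico,
        ← Finset.sum_Ico_consecutive w (Nat.zero_le a) (show a ≤ m by omega),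
        ← Finset.sum_Ico_consecutive w hab.le hbm, ← Finset.range_eq_Ico]
      ring
    rw [hWq, hWr, hWp]
    ring


/-- Shortening a path to length at most `n`, not decreasing the
`lam`-normalized weight. -/
lemma mp_shorten {A : Matrix (Fin n) (Fin n) (WithBot ℝ)} {lam : ℝ} (hn : 1 ≤ n)
    (hlam2 : ∀ μ : ℝ, IsCycleMean A μ → μ ≤ lam) :
    ∀ m : ℕ, 1 ≤ m → ∀ p : ℕ → Fin n, mpPath A m p →
      ∃ m' : ℕ, ∃ p' : ℕ → Fin n, 1 ≤ m' ∧ m' ≤ n ∧ mpPath A m' p' ∧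
        p' 0 = p 0 ∧ p' m' = p m ∧ mpW A p m - m * lam ≤ mpW A p' m' - m' * lam := by
  intro m
  induction m using Nat.strong_induction_on with
  | _ m IH =>
    intro hm p hp
    by_cases hmn : m ≤ n
    · exact ⟨m, p, hm, hmn, hp, rfl, rfl, le_rfl⟩
    · push_neg at hmn
      obtain ⟨a, b, hab, hbn, heq⟩ := mp_pigeon p
      have hbm : b ≤ m := by omega
      obtain ⟨hq, hq0, hqm, hr, hrc, hWsum⟩ := mp_split hp hab hbm heq
      set d := b - a with hd
      have hd1 : 1 ≤ d := by omega
      have hseg := mp_cycle_bound hlam2 hd1 hr hrc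
      obtain ⟨m', p', hm'1, hm'n, hp', hp'0, hp'm, hWle⟩ :=
        IH (m - d) (by omega) (by omega) _ hq
      refine ⟨m', p', hm'1, hm'n, hp', hp'0.trans hq0, hp'm.trans hqm, ?_⟩
      have hcast : ((m - d : ℕ) : ℝ) = (m : ℝ) - (d : ℝ) := by
        rw [Nat.cast_sub (by omega)]
      rw [hcast] at hWle
      rw [hWsum]
      linarith

/-- Shortening a circuit of nonnegative `lam`-normalized weight to length at
most `n`, keeping the normalized weight nonnegative. -/
lemma mp_shortenC {A : Matrix (Fin n) (Fin n) (WithBot ℝ)} {lam : ℝ} :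
    ∀ m : ℕ, 1 ≤ m → ∀ p : ℕ → Fin n, mpPath A m p → p m = p 0 →
      0 ≤ mpW A p m - m * lam →
      ∃ m' : ℕ, ∃ p' : ℕ → Fin n, 1 ≤ m' ∧ m' ≤ n ∧ mpPath A m' p' ∧
        p' m' = p' 0 ∧ 0 ≤ mpW A p' m' - m' * lam := by
  intro m
  induction m using Nat.strong_induction_on with
  | _ m IH =>
    intro hm p hp hc h0
    by_cases hmn : m ≤ n
    · exact ⟨m, p, hm, hmn, hp, hc, h0⟩
    · push_neg at hmn
      obtain ⟨a, b, hab, hbn, heq⟩ := mp_pigeon p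
      have hbm : b ≤ m := by omega
      obtain ⟨hq, hq0, hqm, hr, hrc, hWsum⟩ := mp_split hp hab hbm heq
      set d := b - a with hd
      have hd1 : 1 ≤ d := by omega
      by_cases hcase : 0 ≤ mpW A (fun t => p (a + t)) d - d * lam
      · exact ⟨d, _, hd1, by omega, hr, hrc, hcase⟩
      · push_neg at hcase
        have hcast : ((m - d : ℕ) : ℝ) = (m : ℝ) - (d : ℝ) := by
          rw [Nat.cast_sub (by omega)]
        refine IH (m - d) (by omega) (by omega) _ hq ((hqm.trans hc).trans hq0.symm) ?_
        rw [hcast]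
        rw [hWsum] at h0
        linarith


/-- max-plus powers of a matrix: `mpPw B m = B^(m+1)`. -/
noncomputable def mpPw (B : Matrix (Fin n) (Fin n) (WithBot ℝ)) :
    ℕ → Matrix (Fin n) (Fin n) (WithBot ℝ)
  | 0 => B
  | m + 1 => fun i j => Finset.univ.sup fun l => B i l + mpPw B m l j

/-- the normalized matrix `B = A ⊗ (-lam)`. -/
noncomputable def mpB (A : Matrix (Fin n) (Fin n) (WithBot ℝ)) (lam : ℝ) :
    Matrix (Fin n) (Fin n) (WithBot ℝ) := fun i j => A i j + ((-lam : ℝ) : WithBot ℝ)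

lemma mpPw_succ (B : Matrix (Fin n) (Fin n) (WithBot ℝ)) (m : ℕ) (i j : Fin n) :
    mpPw B (m + 1) i j = Finset.univ.sup (fun l => B i l + mpPw B m l j) := rfl

lemma mp_lower {A : Matrix (Fin n) (Fin n) (WithBot ℝ)} {lam : ℝ} :
    ∀ m : ℕ, ∀ p : ℕ → Fin n, mpPath A (m + 1) p →
      ((mpW A p (m + 1) - (m + 1) * lam : ℝ) : WithBot ℝ) ≤ mpPw (mpB A lam) m (p (m + 1)) (p 0) := by
  intro m
  induction m with
  | zero =>
    intro p hp
    have hu := mp_edge_coe hp (show 0 < 1 by omega)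
    show _ ≤ A (p (0 + 1)) (p 0) + ((-lam : ℝ) : WithBot ℝ)
    rw [hu, ← WithBot.coe_add, WithBot.coe_le_coe]
    unfold mpW
    rw [Finset.sum_range_one]
    push_cast
    ring_nf
    exact le_rfl
  | succ m IH =>
    intro p hp
    have hp' : mpPath A (m + 1) p := fun t ht => hp t (by omega)
    have key : mpB A lam (p (m + 2)) (p (m + 1)) + mpPw (mpB A lam) m (p (m + 1)) (p 0) ≤
        mpPw (mpB A lam) (m + 1) (p (m + 2)) (p 0) := by
      rw [mpPw_succ]
      exact Finset.le_sup (f := fun l => mpB A lam (p (m + 2)) l + mpPw (mpB A lam) m l (p 0))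
        (Finset.mem_univ (p (m + 1)))
    refine le_trans ?_ key
    have hu := mp_edge_coe hp (show m + 1 < m + 2 by omega)
    have hsplit : ((mpW A p (m + 1 + 1) - (((m + 1 : ℕ) : ℝ) + 1) * lam : ℝ) : WithBot ℝ) =
        ((WithBot.unbotD 0 (A (p (m + 2)) (p (m + 1))) + -lam : ℝ) : WithBot ℝ) +
          ((mpW A p (m + 1) - (m + 1) * lam : ℝ) : WithBot ℝ) := by
      rw [← WithBot.coe_add]
      apply congrArg (fun r : ℝ => (r : WithBot ℝ))
      unfold mpW
      rw [Finset.sum_range_succ]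
      push_cast
      ring
    rw [hsplit]
    refine add_le_add (le_of_eq ?_) (IH p hp')
    show _ = A (p (m + 1 + 1)) (p (m + 1)) + ((-lam : ℝ) : WithBot ℝ)
    rw [hu, ← WithBot.coe_add, WithBot.unbotD_coe]

lemma mp_upper (hn : 1 ≤ n) {A : Matrix (Fin n) (Fin n) (WithBot ℝ)} {lam : ℝ} :
    ∀ m : ℕ, ∀ i j : Fin n, mpPw (mpB A lam) m i j = ⊥ ∨
      ∃ p : ℕ → Fin n, mpPath A (m + 1) p ∧ p 0 = j ∧ p (m + 1) = i ∧
        mpPw (mpB A lam) m i j = ((mpW A p (m + 1) - (m + 1) * lam : ℝ) : WithBot ℝ) := by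
  haveI : Nonempty (Fin n) := ⟨⟨0, hn⟩⟩
  intro m
  induction m with
  | zero =>
    intro i j
    by_cases h : A i j = ⊥
    · left
      show A i j + _ = ⊥
      rw [h]
      exact WithBot.bot_add _
    · right
      obtain ⟨u, hu⟩ := WithBot.ne_bot_iff_exists.mp h
      refine ⟨fun t => if t = 0 then j else i, ?_, by simp, by simp, ?_⟩
      · intro t ht
        have ht0 : t = 0 := by omega
        subst ht0
        simpa using h
      · have hW : mpW A (fun t => if t = 0 then j else i) 1 = u := by
          unfold mpW
          rw [Finset.sum_range_one]
          norm_num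
          rw [← hu, WithBot.unbotD_coe]
        show A i j + ((-lam : ℝ) : WithBot ℝ) = _
        rw [← hu, ← WithBot.coe_add, hW]
        exact congrArg (fun r : ℝ => (r : WithBot ℝ)) (by push_cast; ring)
  | succ m IH =>
    intro i j
    obtain ⟨l, -, hl⟩ := Finset.exists_mem_eq_sup Finset.univ Finset.univ_nonempty
      (fun l => mpB A lam i l + mpPw (mpB A lam) m l j)
    have hpw : mpPw (mpB A lam) (m + 1) i j = mpB A lam i l + mpPw (mpB A lam) m l j := hl
    by_cases hB : A i l = ⊥
    · left
      rw [hpw]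
      show A i l + _ + _ = ⊥
      rw [hB, WithBot.bot_add]
      exact WithBot.bot_add _
    · rcases IH l j with hbot | ⟨q, hq, hq0, hqm, hval⟩
      · left
        rw [hpw, hbot]
        exact WithBot.add_bot _
      · right
        obtain ⟨u, hu⟩ := WithBot.ne_bot_iff_exists.mp hB
        set p : ℕ → Fin n := fun t => if t ≤ m + 1 then q t else i with hpdef
        have hpq : ∀ t, t ≤ m + 1 → p t = q t := fun t ht => if_pos ht
        have hpend : p (m + 2) = i := if_neg (by omega)
        refine ⟨p, ?_, by rw [hpq 0 (by omega), hq0], hpend, ?_⟩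
        · intro t ht
          by_cases h : t < m + 1
          · rw [hpq (t + 1) (by omega), hpq t (by omega)]
            exact hq t h
          · have ht' : t = m + 1 := by omega
            subst ht'
            rw [hpend, hpq (m + 1) le_rfl, hqm]
            exact hB
        · have hWp : mpW A p (m + 2) = mpW A q (m + 1) + u := by
            unfold mpW
            rw [Finset.sum_range_succ]
            congr 1
            · refine Finset.sum_congr rfl fun t ht => ?_
              rw [Finset.mem_range] at ht
              rw [hpq (t + 1) (by omega), hpq t (by omega)]
            · rw [hpend, hpq (m + 1) le_rfl, hqm, ← hu, WithBot.unbotD_coe]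
          rw [hpw, hval]
          show A i l + ((-lam : ℝ) : WithBot ℝ) + _ = _
          rw [← hu, ← WithBot.coe_add, ← WithBot.coe_add, hWp]
          exact congrArg (fun r : ℝ => (r : WithBot ℝ)) (by push_cast; ring)

lemma mp_sup_add (s : Finset (Fin n)) (f : Fin n → WithBot ℝ) (c : ℝ) :
    (s.sup fun j => f j + (c : WithBot ℝ)) = s.sup f + (c : WithBot ℝ) := by
  rw [Finset.comp_sup_eq_sup_comp (fun z : WithBot ℝ => z + (c : WithBot ℝ)) ?_ ?_]
  · rfl
  · intro x y
    induction x using WithBot.recBotCoe with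
    | bot => simp
    | coe a =>
      induction y using WithBot.recBotCoe with
      | bot => simp
      | coe b =>
        show ((a ⊔ b : ℝ) : WithBot ℝ) + (c : WithBot ℝ) =
          (((a : ℝ) : WithBot ℝ) + (c : WithBot ℝ)) ⊔ (((b : ℝ) : WithBot ℝ) + (c : WithBot ℝ))
        rw [← WithBot.coe_add, ← WithBot.coe_add, ← WithBot.coe_add, ← WithBot.coe_sup]
        exact congrArg (fun r : ℝ => (r : WithBot ℝ)) (max_add_add_right a b c).symm
  · simp

end MPAux

/-- An irreducible max-plus matrix admits a finite eigenvector for the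
eigenvalue `λ(A)`, and every max-plus eigenvalue with a finite eigenvector
equals `λ(A)`. -/
theorem irreducible_eigenvalue {n : ℕ} (hn : 1 ≤ n)
    (A : Matrix (Fin n) (Fin n) (WithBot ℝ)) (hA : MPIrreducible A)
    (lam : ℝ) (hlam : IsMaxCycleMean A lam) :
    (∃ x : Fin n → ℝ, ∀ i : Fin n,
      (Finset.univ.sup fun j => A i j + ((x j : ℝ) : WithBot ℝ)) =
        ((lam + x i : ℝ) : WithBot ℝ)) ∧
    (∀ (μ : ℝ) (x : Fin n → ℝ),
      (∀ i : Fin n,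
        (Finset.univ.sup fun j => A i j + ((x j : ℝ) : WithBot ℝ)) =
          ((μ + x i : ℝ) : WithBot ℝ)) → μ = lam) := by
  haveI : Nonempty (Fin n) := ⟨⟨0, hn⟩⟩
  have hlam2 := hlam.2
  constructor
  · -- existence of a finite eigenvector for lam
    obtain ⟨mc, hmc, pc, wc, hpcc, hwc, hmean⟩ := hlam.1
    have hpathc : mpPath A mc pc := fun t ht => by
      rw [hwc t ht]; exact WithBot.coe_ne_bot
    have hWc : mpW A pc mc = ∑ t ∈ Finset.range mc, wc t := by
      unfold mpW
      refine Finset.sum_congr rfl fun t ht => ?_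
      rw [Finset.mem_range] at ht
      rw [hwc t ht, WithBot.unbotD_coe]
    have hmcpos : (0 : ℝ) < mc := by exact_mod_cast hmc
    have h0 : 0 ≤ mpW A pc mc - mc * lam := by
      have hs : (∑ t ∈ Finset.range mc, wc t) = mc * lam := by
        rw [hmean]; field_simp
      rw [hWc, hs]; linarith
    obtain ⟨mk, pk, hmk1, hmkn, hpk, hkc, hk0⟩ := mp_shortenC mc hmc pc hpathc hpcc h0
    set y : Fin n → WithBot ℝ :=
      fun i => (Finset.range n).sup fun m => mpPw (mpB A lam) m i (pk 0) with hydef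
    -- lower bound on y along short paths from pk 0
    have hlow : ∀ (m : ℕ) (p : ℕ → Fin n), 1 ≤ m → m ≤ n → mpPath A m p → p 0 = pk 0 →
        ((mpW A p m - m * lam : ℝ) : WithBot ℝ) ≤ y (p m) := by
      intro m p hm1 hmn hp hp0
      have hmm : m - 1 + 1 = m := by omega
      have h := mp_lower (A := A) (lam := lam) (m - 1) p (by rw [hmm]; exact hp)
      rw [hmm] at h
      have hcast : ((m - 1 : ℕ) : ℝ) + 1 = (m : ℝ) := by
        rw [Nat.cast_sub hm1]; push_cast; ring
      rw [hcast, hp0] at h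
      refine h.trans ?_
      simp only [hydef]
      exact Finset.le_sup (f := fun m' => mpPw (mpB A lam) m' (p m) (pk 0))
        (Finset.mem_range.mpr (by omega))
    -- nonnegativity of y at pk 0
    have hy0 : (((0 : ℝ)) : WithBot ℝ) ≤ y (pk 0) := by
      have h := hlow mk pk hmk1 hmkn hpk rfl
      rw [hkc] at h
      exact le_trans (WithBot.coe_le_coe.mpr hk0) h
    -- all powers are dominated by y
    have hkey : ∀ (m : ℕ) (i : Fin n), mpPw (mpB A lam) m i (pk 0) ≤ y i := by
      intro m i
      rcases mp_upper hn (A := A) (lam := lam) m i (pk 0) with hbot | ⟨p, hp, hp0, hpm, hval⟩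
      · rw [hbot]; exact bot_le
      · rw [hval]
        obtain ⟨m', p', hm'1, hm'n, hp', hp'0, hp'm, hWle⟩ :=
          mp_shorten hn hlam2 (m + 1) (by omega) p hp
        have h2 := hlow m' p' hm'1 hm'n hp' (hp'0.trans hp0)
        rw [hp'm, hpm] at h2
        refine le_trans (WithBot.coe_le_coe.mpr ?_) h2
        push_cast at hWle
        linarith
    -- the eigen equation for the normalized matrix
    have hge : ∀ i, y i ≤ Finset.univ.sup fun j => mpB A lam i j + y j := by
      intro i
      simp only [hydef]
      apply Finset.sup_le
      intro m hm
      rw [Finset.mem_range] at hm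
      cases m with
      | zero =>
        have h1 : mpPw (mpB A lam) 0 i (pk 0) = mpB A lam i (pk 0) := rfl
        rw [h1]
        have h2 : mpB A lam i (pk 0) ≤ mpB A lam i (pk 0) + y (pk 0) :=
          calc mpB A lam i (pk 0)
              = mpB A lam i (pk 0) + (((0 : ℝ)) : WithBot ℝ) := by
                rw [WithBot.coe_zero, add_zero]
            _ ≤ mpB A lam i (pk 0) + y (pk 0) := add_le_add_right hy0 _
        exact h2.trans (Finset.le_sup (f := fun j => mpB A lam i j + y j) (Finset.mem_univ (pk 0)))
      | succ m =>
        rw [mpPw_succ]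
        apply Finset.sup_le
        intro l _
        exact le_trans (add_le_add_right (hkey m l) _)
          (Finset.le_sup (f := fun j => mpB A lam i j + y j) (Finset.mem_univ l))
    have hle : ∀ i, (Finset.univ.sup fun j => mpB A lam i j + y j) ≤ y i := by
      intro i
      apply Finset.sup_le
      intro j _
      obtain ⟨m, hm, hym⟩ := Finset.exists_mem_eq_sup (Finset.range n)
        (Finset.nonempty_range_iff.mpr (by omega)) (fun m => mpPw (mpB A lam) m j (pk 0))
      rw [Finset.mem_range] at hm
      have hyj : y j = mpPw (mpB A lam) m j (pk 0) := hym
      rw [hyj]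
      refine le_trans ?_ (hkey (m + 1) i)
      rw [mpPw_succ]
      exact Finset.le_sup (f := fun l => mpB A lam i l + mpPw (mpB A lam) m l (pk 0))
        (Finset.mem_univ j)
    -- finiteness of y
    have hfin : ∀ i, y i ≠ ⊥ := by
      intro i hbot
      obtain ⟨m, hm1, p, hp0, hpm, hp⟩ := hA i (pk 0)
      obtain ⟨m', p', hm'1, hm'n, hp', hp'0, hp'm, -⟩ := mp_shorten hn hlam2 m hm1 p hp
      have h2 := hlow m' p' hm'1 hm'n hp' (hp'0.trans hp0)
      rw [hp'm, hpm, hbot] at h2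
      exact WithBot.coe_ne_bot (le_bot_iff.mp h2)
    set x : Fin n → ℝ := fun i => WithBot.unbotD 0 (y i) with hxdef
    have hyx : ∀ i, y i = ((x i : ℝ) : WithBot ℝ) := by
      intro i
      obtain ⟨a, ha⟩ := WithBot.ne_bot_iff_exists.mp (hfin i)
      simp only [hxdef, ← ha, WithBot.unbotD_coe]
    refine ⟨x, fun i => ?_⟩
    have hB : (Finset.univ.sup fun j => mpB A lam i j + ((x j : ℝ) : WithBot ℝ))
        = ((x i : ℝ) : WithBot ℝ) := by
      have h := le_antisymm (hle i) (hge i)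
      simp only [hyx] at h
      exact h
    have hAB : ∀ j : Fin n, A i j + ((x j : ℝ) : WithBot ℝ) =
        (mpB A lam i j + ((x j : ℝ) : WithBot ℝ)) + ((lam : ℝ) : WithBot ℝ) := by
      intro j
      show A i j + _ = ((A i j + ((-lam : ℝ) : WithBot ℝ)) + _) + _
      by_cases h : A i j = ⊥
      · rw [h, WithBot.bot_add, WithBot.bot_add, WithBot.bot_add, WithBot.bot_add]
      · obtain ⟨a, ha⟩ := WithBot.ne_bot_iff_exists.mp h
        rw [← ha, ← WithBot.coe_add, ← WithBot.coe_add, ← WithBot.coe_add, ← WithBot.coe_add]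
        exact congrArg (fun r : ℝ => (r : WithBot ℝ)) (by ring)
    calc (Finset.univ.sup fun j => A i j + ((x j : ℝ) : WithBot ℝ))
        = Finset.univ.sup fun j => (mpB A lam i j + ((x j : ℝ) : WithBot ℝ))
            + ((lam : ℝ) : WithBot ℝ) := Finset.sup_congr rfl fun j _ => hAB j
      _ = (Finset.univ.sup fun j => mpB A lam i j + ((x j : ℝ) : WithBot ℝ))
            + ((lam : ℝ) : WithBot ℝ) := mp_sup_add _ _ _
      _ = ((x i : ℝ) : WithBot ℝ) + ((lam : ℝ) : WithBot ℝ) := by rw [hB]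
      _ = ((lam + x i : ℝ) : WithBot ℝ) := by
            rw [← WithBot.coe_add]
            exact congrArg (fun r : ℝ => (r : WithBot ℝ)) (by ring)
  · -- uniqueness of the eigenvalue
    intro μ x hx
    have hedge : ∀ i j : Fin n, A i j + ((x j : ℝ) : WithBot ℝ) ≤ ((μ + x i : ℝ) : WithBot ℝ) := by
      intro i j
      rw [← hx i]
      exact Finset.le_sup (f := fun j => A i j + ((x j : ℝ) : WithBot ℝ)) (Finset.mem_univ j)
    have hle1 : lam ≤ μ := by
      obtain ⟨m, hm, p, w, hc, hw, hmean⟩ := hlam.1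
      have hstep : ∀ t ∈ Finset.range m, w t + x (p t) ≤ μ + x (p (t + 1)) := by
        intro t ht
        rw [Finset.mem_range] at ht
        have h := hedge (p (t + 1)) (p t)
        rw [hw t ht, ← WithBot.coe_add, WithBot.coe_le_coe] at h
        exact h
      have hsum := Finset.sum_le_sum hstep
      rw [Finset.sum_add_distrib, Finset.sum_add_distrib, Finset.sum_const,
        Finset.card_range, nsmul_eq_mul] at hsum
      have htel : ∑ t ∈ Finset.range m, (x (p (t + 1)) - x (p t)) = x (p m) - x (p 0) :=
        Finset.sum_range_sub (fun t => x (p t)) m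
      rw [Finset.sum_sub_distrib, hc, sub_self] at htel
      have hmpos : (0 : ℝ) < m := by exact_mod_cast hm
      rw [hmean, div_le_iff₀ hmpos]
      linarith
    have hle2 : μ ≤ lam := by
      have hgx : ∀ i : Fin n, ∃ j : Fin n, A i j ≠ ⊥ ∧ WithBot.unbotD 0 (A i j) + x j = μ + x i := by
        intro i
        obtain ⟨j, -, hj⟩ := Finset.exists_mem_eq_sup Finset.univ Finset.univ_nonempty
          (fun j => A i j + ((x j : ℝ) : WithBot ℝ))
        rw [hx i] at hj
        have hne : A i j ≠ ⊥ := by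
          intro h
          rw [h, WithBot.bot_add] at hj
          exact WithBot.coe_ne_bot hj
        obtain ⟨a, ha⟩ := WithBot.ne_bot_iff_exists.mp hne
        rw [← ha, ← WithBot.coe_add, WithBot.coe_inj] at hj
        refine ⟨j, hne, ?_⟩
        rw [← ha, WithBot.unbotD_coe]
        linarith [hj]
      choose g hg1 hg2 using hgx
      set q : ℕ → Fin n := fun t => g^[t] ⟨0, hn⟩ with hqdef
      have hqsucc : ∀ t, q (t + 1) = g (q t) := fun t => Function.iterate_succ_apply' g t _
      obtain ⟨a, b, hab, hbn, hq⟩ := mp_pigeon q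
      set m := b - a with hmdef
      set p : ℕ → Fin n := fun t => q (b - t) with hpdef
      have hpc : p m = p 0 := by
        simp only [hpdef]
        rw [show b - m = a by omega, Nat.sub_zero]
        exact hq
      have hedge2 : ∀ t < m, A (p (t + 1)) (p t) =
          ((μ + x (p (t + 1)) - x (p t) : ℝ) : WithBot ℝ) := by
        intro t ht
        have h1 : p t = g (p (t + 1)) := by
          simp only [hpdef]
          rw [show b - t = (b - (t + 1)) + 1 by omega, hqsucc]
        rw [h1]
        have h2 := hg2 (p (t + 1))
        obtain ⟨a', ha'⟩ := WithBot.ne_bot_iff_exists.mp (hg1 (p (t + 1)))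
        rw [← ha', WithBot.unbotD_coe] at h2
        rw [← ha']
        exact congrArg (fun r : ℝ => (r : WithBot ℝ)) (by linarith)
      have hcyc : IsCycleMean A μ := by
        refine ⟨m, by omega, p, fun t => μ + x (p (t + 1)) - x (p t), hpc, hedge2, ?_⟩
        have htel : ∑ t ∈ Finset.range m, (x (p (t + 1)) - x (p t)) = x (p m) - x (p 0) :=
          Finset.sum_range_sub (fun t => x (p t)) m
        rw [hpc, sub_self] at htel
        have hsplit : ∑ t ∈ Finset.range m, (μ + x (p (t + 1)) - x (p t)) =
            ∑ t ∈ Finset.range m, (μ + (x (p (t + 1)) - x (p t))) := by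
          refine Finset.sum_congr rfl fun t _ => by ring
        rw [hsplit, Finset.sum_add_distrib, htel, add_zero, Finset.sum_const,
          Finset.card_range, nsmul_eq_mul]
        have hmne : (m : ℝ) ≠ 0 := by
          have : (0 : ℝ) < m := by exact_mod_cast (show 1 ≤ m by omega)
          linarith
        field_simp
      exact hlam2 μ hcyc
    linarith
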